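/- The composition of two rational binary relations is rational: if R₁, R₂ ⊆ Σ* × Σ* are recognized by finite transducers, then R₁ ∘ R₂ = {(x,z) : ∃ y, (x,y) ∈ R₂ ∧ (y,z) ∈ R₁} is also recognized by a finite transducer. -/

import Mathlib

/-- A finite 2-tape transducer over the alphabet `A`: transitions are labeled by
pairs in `(A ∪ {ε}) × (A ∪ {ε})`, encoded via `Option A`. -/
structure Transducer (A : Type*) where
  Q : Type
  fin : Finite Q
  init : Set Q
  final : Set Q
  step : Q → Option A × Option A → Q → Prop

/-- A path of a transducer from state `p` to state `r`, reading `u` on the first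
tape and `v` on the second tape. -/
inductive Transducer.Path {A : Type*} (T : Transducer A) :
    T.Q → List A → List A → T.Q → Prop
  | nil (q : T.Q) : Transducer.Path T q [] [] q
  | cons {p q r : T.Q} {u v : List A} (a b : Option A) :
      T.step p (a, b) q → Transducer.Path T q u v r →
      Transducer.Path T p (a.toList ++ u) (b.toList ++ v) r

/-- The binary relation recognized by a transducer. -/
def Transducer.Rel {A : Type*} (T : Transducer A) (u v : List A) : Prop :=
  ∃ p ∈ T.init, ∃ q ∈ T.final, T.Path p u v q

/-- A binary relation on words is rational if it is recognized by a finite transducer. -/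
def IsRationalRel {A : Type*} (R : List A → List A → Prop) : Prop :=
  ∃ T : Transducer A, ∀ u v, T.Rel u v ↔ R u v

/-!
Product construction. A state of the composite machine is a pair of states of the two
transducers, and the middle word `y` is never stored: each letter of it is written by a step of
the transducer for `R₂` and read at the same moment by a step of the transducer for `R₁`, while
steps with `ε` on the middle tape move one machine and leave the other idle. Projecting a run of
the product gives the two runs and their common middle word; conversely, two runs are
interleaved by letting the first machine produce, with the second idle, everything up to its
next middle letter.
-/

namespace Transducer

variable {A : Type*}

theorem Path.append {T : Transducer A} {p q r : T.Q} {u v u' v' : List A}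
    (h : T.Path p u v q) (h' : T.Path q u' v' r) :
    T.Path p (u ++ u') (v ++ v') r := by
  induction h with
  | nil => simpa using h'
  | cons a b hs _ ih => simpa [List.append_assoc] using Path.cons a b hs (ih h')

def comp (T₁ T₂ : Transducer A) : Transducer A where
  Q := T₂.Q × T₁.Q
  fin := have := T₁.fin; have := T₂.fin; inferInstance
  init := {s | s.1 ∈ T₂.init ∧ s.2 ∈ T₁.init}
  final := {s | s.1 ∈ T₂.final ∧ s.2 ∈ T₁.final}
  step := fun s l t =>
    (∃ b, T₂.step s.1 (l.1, some b) t.1 ∧ T₁.step s.2 (some b, l.2) t.2) ∨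
    (T₂.step s.1 (l.1, none) t.1 ∧ l.2 = none ∧ s.2 = t.2) ∨
    (T₁.step s.2 (none, l.2) t.2 ∧ l.1 = none ∧ s.1 = t.1)

variable {T₁ T₂ : Transducer A}

theorem Path.comp_of_snd_nil {p q : T₂.Q} {x y : List A} (h : T₂.Path p x y q) (hy : y = [])
    (s : T₁.Q) : (T₁.comp T₂).Path (p, s) x [] (q, s) := by
  induction h with
  | nil => exact .nil _
  | @cons p q _ _ _ a b hs _ ih =>
    cases b with
    | some b => simp at hy
    | none =>
      simpa using Path.cons (T := T₁.comp T₂) (p := (p, s)) (q := (q, s)) a none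
        (Or.inr (Or.inl ⟨hs, rfl, rfl⟩)) (ih hy)

theorem Path.exists_step_of_snd_eq_cons {T : Transducer A} {p q : T.Q} {x y v : List A} {c : A}
    (h : T.Path p x y q) (hy : y = c :: v) :
    ∃ x₁ a x₂ m m', x = x₁ ++ a.toList ++ x₂ ∧ T.Path p x₁ [] m ∧
      T.step m (a, some c) m' ∧ T.Path m' x₂ v q := by
  induction h generalizing c v with
  | nil => simp at hy
  | cons a b hs h ih =>
    cases b with
    | some b =>
      obtain ⟨rfl, rfl⟩ : b = c ∧ _ = v := by simpa using hy
      exact ⟨[], a, _, _, _, by simp, .nil _, hs, h⟩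
    | none =>
      obtain ⟨x₁, a', x₂, m, m', rfl, h₁, hstep, h₂⟩ := ih (by simpa using hy)
      exact ⟨a.toList ++ x₁, a', x₂, m, m', by simp, by simpa using Path.cons a none hs h₁,
        hstep, h₂⟩

theorem Path.comp {p₂ q₂ : T₂.Q} {p₁ q₁ : T₁.Q} {x y z : List A}
    (h₂ : T₂.Path p₂ x y q₂) (h₁ : T₁.Path p₁ y z q₁) :
    (T₁.comp T₂).Path (p₂, p₁) x z (q₂, q₁) := by
  induction h₁ generalizing p₂ x with
  | nil => exact h₂.comp_of_snd_nil rfl _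
  | @cons p q _ _ _ a b hs _ ih =>
    cases a with
    | none =>
      simpa using Path.cons (T := T₁.comp T₂) (p := (p₂, p)) (q := (p₂, q)) none b
        (Or.inr (Or.inr ⟨hs, rfl, rfl⟩)) (ih (by simpa using h₂))
    | some c =>
      obtain ⟨x₁, a', x₂, m, m', rfl, hpre, hstep, hpost⟩ :=
        h₂.exists_step_of_snd_eq_cons rfl
      have tail := Path.cons (T := T₁.comp T₂) (p := (m, p)) (q := (m', q)) a' b
        (Or.inl ⟨c, hstep, hs⟩) (ih hpost)
      simpa [List.append_assoc] using (hpre.comp_of_snd_nil rfl p).append tail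

theorem Path.exists_of_comp {s t : (T₁.comp T₂).Q} {x z : List A}
    (h : (T₁.comp T₂).Path s x z t) :
    ∃ y, T₂.Path s.1 x y t.1 ∧ T₁.Path s.2 y z t.2 := by
  induction h with
  | nil => exact ⟨[], .nil _, .nil _⟩
  | cons a c hs _ ih =>
    obtain ⟨y, hy₂, hy₁⟩ := ih
    rcases hs with ⟨b, h₂, h₁⟩ | ⟨h₂, rfl, he⟩ | ⟨h₁, rfl, he⟩
    · exact ⟨b :: y, Path.cons a (some b) h₂ hy₂, Path.cons (some b) c h₁ hy₁⟩
    · exact ⟨y, Path.cons a none h₂ hy₂, he ▸ hy₁⟩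
    · exact ⟨y, he ▸ hy₂, Path.cons none c h₁ hy₁⟩

theorem rel_comp_iff {x z : List A} :
    (T₁.comp T₂).Rel x z ↔ ∃ y, T₂.Rel x y ∧ T₁.Rel y z := by
  constructor
  · rintro ⟨⟨p₂, p₁⟩, ⟨hp₂, hp₁⟩, ⟨q₂, q₁⟩, ⟨hq₂, hq₁⟩, h⟩
    obtain ⟨y, h₂, h₁⟩ := h.exists_of_comp
    exact ⟨y, ⟨p₂, hp₂, q₂, hq₂, h₂⟩, ⟨p₁, hp₁, q₁, hq₁, h₁⟩⟩
  · rintro ⟨y, ⟨p₂, hp₂, q₂, hq₂, h₂⟩, ⟨p₁, hp₁, q₁, hq₁, h₁⟩⟩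
    exact ⟨(p₂, p₁), ⟨hp₂, hp₁⟩, (q₂, q₁), ⟨hq₂, hq₁⟩, h₂.comp h₁⟩

end Transducer

/-- The composition of two rational binary relations is rational. -/
theorem rational_comp {A : Type*} (R₁ R₂ : List A → List A → Prop)
    (h₁ : IsRationalRel R₁) (h₂ : IsRationalRel R₂) :
    IsRationalRel (fun x z => ∃ y : List A, R₂ x y ∧ R₁ y z) := by
  obtain ⟨T₁, hT₁⟩ := h₁
  obtain ⟨T₂, hT₂⟩ := h₂
  exact ⟨T₁.comp T₂, fun x z => by simp only [Transducer.rel_comp_iff, hT₁, hT₂]⟩
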